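/- arXiv:2102.04413 — 2 statements merged into one kernel-verified Lean document; each statement's English description precedes it below -/
import Mathlib

section
/- Suppose h : (0,∞) → ℝ is continuous and strictly monotone with h(1) = 0, and p, q are continuous strictly positive probability densities on [0,1] with transport map T = F_p^{-1} ∘ F_q. If ∫_0^1 ‖h(T'(x))‖² q(x) dx = 0, then there exists a constant c ∈ ℝ such that T(x) = x + c for all x, and hence p(x + c) = q(x) on the support of q. -/
/-!
The integrand `‖h (T' x)‖² q x` is continuous and nonnegative on `[0, 1]`, so a zero integral
forces it to vanish identically. As `q > 0` and the injective `h` vanishes only at `1`, this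
gives `T' ≡ 1`, so `T` is a translation, and the push-forward relation `p (T x) T' x = q x`
becomes `p (x + c) = q x`.
-/

open Set

lemma eqOn_zero_of_integral_eq_zero_of_nonneg {f : ℝ → ℝ} {a b : ℝ} (hab : a < b)
    (hf : ContinuousOn f (Icc a b)) (hnonneg : ∀ x ∈ Icc a b, 0 ≤ f x)
    (hzero : ∫ x in a..b, f x = 0) : EqOn f 0 (Icc a b) := fun c hc =>
  (hnonneg c hc).antisymm' <| not_lt.1 fun hpos =>
    (intervalIntegral.integral_pos hab hf (fun x hx => hnonneg x (Ioc_subset_Icc_self hx))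
      ⟨c, hc, hpos⟩).ne' hzero

lemma eq_add_const_of_hasDerivAt_one {T : ℝ → ℝ} {a b : ℝ}
    (hT : ∀ x ∈ Icc a b, HasDerivAt T 1 x) : ∀ x ∈ Icc a b, T x = x + (T a - a) :=
  eq_of_has_deriv_right_eq (fun x hx => (hT x (Ico_subset_Icc_self hx)).hasDerivWithinAt)
    (fun x _ => ((hasDerivAt_id x).add_const _).hasDerivWithinAt)
    (fun x hx => (hT x hx).continuousAt.continuousWithinAt)
    (continuous_id.add continuous_const).continuousOn (by ring)

theorem hessian_distance_zero_iff_translation_general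
    (h p q T : ℝ → ℝ)
    (hh : ContinuousOn h (Set.Ioi 0))
    (hhmono : StrictMonoOn h (Set.Ioi 0) ∨ StrictAntiOn h (Set.Ioi 0))
    (hh1 : h 1 = 0)
    (hqC1 : ContDiffOn ℝ 1 q (Set.Icc 0 1))
    (hqpos : ∀ x ∈ Set.Icc (0:ℝ) 1, 0 < q x)
    (hTC1 : ContDiff ℝ 1 T)
    (hT'pos : ∀ x ∈ Set.Icc (0:ℝ) 1, 0 < deriv T x)
    (hTpush : ∀ x ∈ Set.Icc (0:ℝ) 1, p (T x) * deriv T x = q x)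
    (hzero : (∫ x in (0:ℝ)..1, ‖h (deriv T x)‖ ^ 2 * q x) = 0) :
    ∃ c : ℝ, (∀ x ∈ Set.Icc (0:ℝ) 1, T x = x + c) ∧
      (∀ x ∈ Set.Icc (0:ℝ) 1, p (x + c) = q x) := by
  have hT'cont : Continuous (deriv T) := hTC1.continuous_deriv le_rfl
  have hintegrand_zero : EqOn (fun x => ‖h (deriv T x)‖ ^ 2 * q x) 0 (Icc 0 1) :=
    eqOn_zero_of_integral_eq_zero_of_nonneg zero_lt_one
      (((hh.comp hT'cont.continuousOn hT'pos).norm.pow 2).mul hqC1.continuousOn)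
      (fun x hx => mul_nonneg (by positivity) (hqpos x hx).le) hzero
  have hinj : InjOn h (Ioi 0) := hhmono.elim StrictMonoOn.injOn StrictAntiOn.injOn
  have hderiv_one : ∀ x ∈ Icc (0:ℝ) 1, deriv T x = 1 := fun x hx => by
    have hhx : h (deriv T x) = 0 := by simpa [(hqpos x hx).ne'] using hintegrand_zero hx
    exact hinj (hT'pos x hx) (mem_Ioi.2 one_pos) (hhx.trans hh1.symm)
  have htranslate := eq_add_const_of_hasDerivAt_one fun x hx =>
    hderiv_one x hx ▸ (hTC1.differentiable one_ne_zero x).hasDerivAt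
  refine ⟨T 0 - 0, htranslate, fun x hx => ?_⟩
  rw [← htranslate x hx, ← hTpush x hx, hderiv_one x hx, mul_one]

/-- degenerate distance implies T is a translation, hence p(·+c) = q. -/
theorem hessian_distance_zero_iff_translation
    (h p q T : ℝ → ℝ)
    (hh : ContinuousOn h (Set.Ioi 0))
    (hhmono : StrictMonoOn h (Set.Ioi 0) ∨ StrictAntiOn h (Set.Ioi 0))
    (hh1 : h 1 = 0)
    (hpC1 : ContDiffOn ℝ 1 p (Set.Icc 0 1)) (hqC1 : ContDiffOn ℝ 1 q (Set.Icc 0 1))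
    (hppos : ∀ x ∈ Set.Icc (0:ℝ) 1, 0 < p x)
    (hqpos : ∀ x ∈ Set.Icc (0:ℝ) 1, 0 < q x)
    (hTC1 : ContDiff ℝ 1 T)
    (hT'pos : ∀ x ∈ Set.Icc (0:ℝ) 1, 0 < deriv T x)
    (hTpush : ∀ x ∈ Set.Icc (0:ℝ) 1, p (T x) * deriv T x = q x)
    (hzero : (∫ x in (0:ℝ)..1, ‖h (deriv T x)‖ ^ 2 * q x) = 0) :
    ∃ c : ℝ, (∀ x ∈ Set.Icc (0:ℝ) 1, T x = x + c) ∧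
      (∀ x ∈ Set.Icc (0:ℝ) 1, p (x + c) = q x) :=
  hessian_distance_zero_iff_translation_general h p q T hh hhmono hh1 hqC1 hqpos hTC1 hT'pos hTpush
    hzero
end

section
/- Suppose p, q are continuously differentiable strictly positive probability densities on ℝ with p(x + c) = q(x) for a constant c, both supported so that their CDFs are bijections onto (0,1). Then (F_p^{-1})'(y) = (F_q^{-1})'(y) for all y ∈ (0,1), and consequently Dist_H(p,q) = 0 for any continuous h, where Dist_H(p,q)² = ∫_0^1 ‖h((F_p^{-1})'(y)) − h((F_q^{-1})'(y))‖² dy. -/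
open Set

/-- An inverse of a strictly increasing CDF onto `(0,1)` is continuous at interior points. -/
lemma inv_continuousAt (F Finv : ℝ → ℝ) (hmono : StrictMono F)
    (hbij : Set.BijOn F Set.univ (Set.Ioo 0 1))
    (hright : ∀ y ∈ Set.Ioo (0:ℝ) 1, F (Finv y) = y)
    (hleft : ∀ x, Finv (F x) = x) (x₀ : ℝ) : ContinuousAt Finv (F x₀) := by
  have hmem : ∀ x : ℝ, F x ∈ Set.Ioo (0:ℝ) 1 := fun x => hbij.mapsTo (mem_univ x)
  rw [ContinuousAt, hleft x₀, (nhds_basis_Ioo_pos x₀).tendsto_right_iff]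
  intro ε hε
  have hsub : Set.Ioo (F (x₀ - ε)) (F (x₀ + ε)) ∈ nhds (F x₀) := by
    apply Ioo_mem_nhds <;> [exact hmono (by linarith); exact hmono (by linarith)]
  filter_upwards [hsub] with y hy
  have hy01 : y ∈ Set.Ioo (0:ℝ) 1 :=
    ⟨lt_trans (hmem (x₀ - ε)).1 hy.1, lt_trans hy.2 (hmem (x₀ + ε)).2⟩
  have h1 : F (x₀ - ε) < F (Finv y) := by rw [hright y hy01]; exact hy.1
  have h2 : F (Finv y) < F (x₀ + ε) := by rw [hright y hy01]; exact hy.2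
  exact ⟨by linarith [hmono.lt_iff_lt.mp h1], by linarith [hmono.lt_iff_lt.mp h2]⟩

/-- Derivative of the inverse CDF. -/
lemma inv_hasDerivAt (F Finv ρ : ℝ → ℝ) (hρ : ∀ x, 0 < ρ x)
    (hF' : ∀ x, HasDerivAt F (ρ x) x)
    (hbij : Set.BijOn F Set.univ (Set.Ioo 0 1))
    (hright : ∀ y ∈ Set.Ioo (0:ℝ) 1, F (Finv y) = y)
    (hleft : ∀ x, Finv (F x) = x) :
    ∀ y ∈ Set.Ioo (0:ℝ) 1, HasDerivAt Finv (ρ (Finv y))⁻¹ y := by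
  have hmono : StrictMono F := strictMono_of_deriv_pos fun x => by
    rw [(hF' x).deriv]; exact hρ x
  intro y hy
  have hFy : F (Finv y) = y := hright y hy
  have hcont : ContinuousAt Finv y := by
    have := inv_continuousAt F Finv hmono hbij hright hleft (Finv y)
    rwa [hFy] at this
  have hfg : ∀ᶠ z in nhds y, F (Finv z) = z := by
    filter_upwards [isOpen_Ioo.mem_nhds hy] with z hz using hright z hz
  exact HasDerivAt.of_local_left_inverse hcont (hF' (Finv y)) (hρ (Finv y)).ne' hfg

/-- if p(· + c) = q then (F_p⁻¹)' = (F_q⁻¹)' on (0,1) and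
Dist_H(p,q) = 0 for any continuous h. -/
theorem translation_implies_hessian_distance_zero
    (h p q Fp Fq Fpinv Fqinv : ℝ → ℝ) (c : ℝ)
    (hh : ContinuousOn h (Set.Ioi 0))
    (hpC1 : ContDiff ℝ 1 p) (hqC1 : ContDiff ℝ 1 q)
    (hppos : ∀ x, 0 < p x) (hqpos : ∀ x, 0 < q x)
    (htrans : ∀ x, p (x + c) = q x)
    (hFp' : ∀ x, HasDerivAt Fp (p x) x)
    (hFq' : ∀ x, HasDerivAt Fq (q x) x)
    (hFpbij : Set.BijOn Fp Set.univ (Set.Ioo 0 1))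
    (hFqbij : Set.BijOn Fq Set.univ (Set.Ioo 0 1))
    (hFpinv_right : ∀ y ∈ Set.Ioo (0:ℝ) 1, Fp (Fpinv y) = y)
    (hFpinv_left : ∀ x, Fpinv (Fp x) = x)
    (hFqinv_right : ∀ y ∈ Set.Ioo (0:ℝ) 1, Fq (Fqinv y) = y)
    (hFqinv_left : ∀ x, Fqinv (Fq x) = x) :
    (∀ y ∈ Set.Ioo (0:ℝ) 1, deriv Fpinv y = deriv Fqinv y) ∧
      Real.sqrt (∫ y in (0:ℝ)..1, ‖h (deriv Fpinv y) - h (deriv Fqinv y)‖ ^ 2) = 0 := by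
  -- Step 1: Fp (x + c) = Fq x for all x
  have hD : ∀ x : ℝ, Fp (x + c) - Fq x = Fp (0 + c) - Fq 0 := by
    have hdiff : Differentiable ℝ (fun x => Fp (x + c) - Fq x) := fun x =>
      (((hFp' (x + c)).comp x (((hasDerivAt_id x).add_const c))).sub (hFq' x)).differentiableAt
    have hderiv : ∀ x, deriv (fun x => Fp (x + c) - Fq x) x = 0 := by
      intro x
      have h1 : HasDerivAt (fun x => Fp (x + c) - Fq x) (p (x + c) * 1 - q x) x :=
        ((hFp' (x + c)).comp x (((hasDerivAt_id x).add_const c))).sub (hFq' x)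
      rw [h1.deriv, htrans x]; ring
    exact fun x => is_const_of_deriv_eq_zero hdiff hderiv x 0
  set k : ℝ := Fp (0 + c) - Fq 0 with hk
  -- Step 2: k = 0 by comparing images
  have hkz : k = 0 := by
    have himg : (fun t => t - k) '' Set.Ioo (0:ℝ) 1 = Set.Ioo (0:ℝ) 1 := by
      have h1 : (fun t => t - k) '' (Fp '' Set.univ) = Fq '' Set.univ := by
        ext z
        constructor
        · rintro ⟨w, ⟨x, -, rfl⟩, rfl⟩
          refine ⟨x - c, Set.mem_univ _, ?_⟩
          have h2 := hD (x - c)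
          rw [show x - c + c = x by ring] at h2
          simp only []
          linarith
        · rintro ⟨x, -, rfl⟩
          refine ⟨Fp (x + c), ⟨x + c, Set.mem_univ _, rfl⟩, ?_⟩
          have h2 := hD x
          simp only []
          linarith
      rw [hFpbij.image_eq, hFqbij.image_eq] at h1
      exact h1
    rw [Set.image_sub_const_Ioo] at himg
    have h0 : (0:ℝ) - k = 0 := by
      have := himg ▸ (congrArg sInf himg)
      have hlt : (0:ℝ) - k < 1 - k := by linarith
      calc (0:ℝ) - k = sInf (Set.Ioo (0 - k) (1 - k)) := (csInf_Ioo hlt).symm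
        _ = sInf (Set.Ioo (0:ℝ) 1) := by rw [himg]
        _ = 0 := csInf_Ioo one_pos
    linarith
  have htransF : ∀ x : ℝ, Fp (x + c) = Fq x := fun x => by have := hD x; rw [hkz] at this; linarith
  -- Step 3: Fpinv y = Fqinv y + c on (0,1)
  have hinv : ∀ y ∈ Set.Ioo (0:ℝ) 1, Fpinv y = Fqinv y + c := by
    intro y hy
    have h1 : Fp (Fqinv y + c) = y := by rw [htransF (Fqinv y), hFqinv_right y hy]
    calc Fpinv y = Fpinv (Fp (Fqinv y + c)) := by rw [h1]
      _ = Fqinv y + c := hFpinv_left _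
  -- Step 4: derivatives of inverses
  have hdp := inv_hasDerivAt Fp Fpinv p hppos hFp' hFpbij hFpinv_right hFpinv_left
  have hdq := inv_hasDerivAt Fq Fqinv q hqpos hFq' hFqbij hFqinv_right hFqinv_left
  have hmain : ∀ y ∈ Set.Ioo (0:ℝ) 1, deriv Fpinv y = deriv Fqinv y := by
    intro y hy
    rw [(hdp y hy).deriv, (hdq y hy).deriv, hinv y hy, htrans (Fqinv y)]
  refine ⟨hmain, ?_⟩
  have : (∫ y in (0:ℝ)..1, ‖h (deriv Fpinv y) - h (deriv Fqinv y)‖ ^ 2) = 0 := by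
    rw [intervalIntegral.integral_of_le zero_le_one,
      MeasureTheory.integral_Ioc_eq_integral_Ioo]
    rw [MeasureTheory.setIntegral_congr_fun measurableSet_Ioo
      (g := fun _ => (0:ℝ)) ?_, MeasureTheory.integral_zero]
    intro y hy
    simp only [hmain y hy, sub_self, norm_zero]
    ring
  rw [this, Real.sqrt_zero]
end
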